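/- arXiv:1703.05011 — 2 statements merged into one kernel-verified Lean document; each statement's English description precedes it below -/
import Mathlib

section
/- If (L_j)_{j∈J} is a finite family of languages with L_j ⊆ Σ_j* and the alphabets are pairwise disjoint (Σ_j ∩ Σ_{j'} = ∅ for j ≠ j'), and each L_j is nonblocking in the sense that cl(M_j) = L_j for given marked languages M_j ⊆ L_j, then cl(∥_{j∈J} M_j) = ∥_{j∈J} L_j. -/
/-!
Prefix closure always commutes one way with parallel composition: a prefix of a synchronised
marked word projects to prefixes of marked words. Conversely, given `w` whose projections
`proj (Sig j) w` extend to marked words `proj (Sig j) w ++ v j ∈ M j`, `w` followed by all the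
extensions `v j` is marked in the composition, because over pairwise disjoint alphabets
projecting onto `Sig j` keeps exactly the block `v j` and erases all the others.
-/

def cl {α : Type*} (L : Set (List α)) : Set (List α) := {w | ∃ u, w ++ u ∈ L}

open scoped Classical in
noncomputable def proj {σ : Type*} (S : Set σ) (w : List σ) : List σ :=
  w.filter (fun a => decide (a ∈ S))

/-- Parallel composition of a family of languages `L j ⊆ (Sig j)*`,
taken over the union alphabet. -/
noncomputable def parFam {σ : Type*} {J : Type*} (Sig : J → Set σ)
    (L : J → Set (List σ)) : Set (List σ) :=
  {w | (∀ a ∈ w, ∃ j, a ∈ Sig j) ∧ ∀ j, proj (Sig j) w ∈ L j}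

open Function
open scoped Classical

section Proj

variable {σ : Type*} (S : Set σ)

lemma proj_append (u v : List σ) : proj S (u ++ v) = proj S u ++ proj S v :=
  List.filter_append ..

variable {S}

lemma proj_eq_self {w : List σ} (h : ∀ a ∈ w, a ∈ S) : proj S w = w :=
  List.filter_eq_self.mpr fun a ha => decide_eq_true (h a ha)

lemma proj_eq_nil {w : List σ} (h : ∀ a ∈ w, a ∉ S) : proj S w = [] :=
  List.filter_eq_nil_iff.mpr fun a ha => by simpa using h a ha

lemma proj_flatMap_of_pairwise_disjoint {J : Type*} {Sig : J → Set σ}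
    (hdisj : Pairwise (Disjoint on Sig)) {u : J → List σ} (hu : ∀ i, ∀ a ∈ u i, a ∈ Sig i)
    {j : J} {l : List J} (hl : l.Nodup) (hj : j ∈ l) :
    proj (Sig j) (l.flatMap u) = u j := by
  have h_erase : ∀ {i}, i ≠ j → ∀ a ∈ u i, a ∉ Sig j := fun hij a ha =>
    Set.disjoint_left.mp (hdisj hij) (hu _ a ha)
  induction l with
  | nil => cases hj
  | cons i l ih =>
    obtain ⟨hil, hl⟩ := List.nodup_cons.mp hl
    rw [List.flatMap_cons, proj_append]
    by_cases hij : i = j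
    · subst hij
      rw [proj_eq_self (hu i), proj_eq_nil, List.append_nil]
      simp only [List.mem_flatMap]
      rintro a ⟨k, hk, ha⟩
      exact h_erase (fun hki => hil (hki ▸ hk)) a ha
    · rw [proj_eq_nil (h_erase hij), ih hl ((List.mem_cons.mp hj).resolve_left (Ne.symm hij)),
        List.nil_append]

end Proj

section ParFam

variable {σ J : Type*} (Sig : J → Set σ)

lemma subset_cl {α : Type*} (L : Set (List α)) : L ⊆ cl L :=
  fun w hw => ⟨[], by simpa using hw⟩

lemma cl_parFam_subset (M : J → Set (List σ)) :
    cl (parFam Sig M) ⊆ parFam Sig fun j => cl (M j) := by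
  rintro w ⟨u, hall, hproj⟩
  refine ⟨fun a ha => hall a (List.mem_append_left u ha), fun j => ⟨proj (Sig j) u, ?_⟩⟩
  rw [← proj_append]
  exact hproj j

variable {Sig}

lemma parFam_cl_subset [Fintype J] (hdisj : Pairwise (Disjoint on Sig))
    {M : J → Set (List σ)} (hM : ∀ j, ∀ w ∈ M j, ∀ a ∈ w, a ∈ Sig j) :
    (parFam Sig fun j => cl (M j)) ⊆ cl (parFam Sig M) := by
  rintro w ⟨hall, hproj⟩
  choose v hv using hproj
  have hvSig : ∀ j, ∀ a ∈ v j, a ∈ Sig j := fun j a ha =>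
    hM j _ (hv j) a (List.mem_append_right _ ha)
  refine ⟨Finset.univ.toList.flatMap v, fun a ha => ?_, fun j => ?_⟩
  · rcases List.mem_append.mp ha with ha | ha
    · exact hall a ha
    · obtain ⟨j, -, ha⟩ := List.mem_flatMap.mp ha
      exact ⟨j, hvSig j a ha⟩
  · rw [proj_append, proj_flatMap_of_pairwise_disjoint hdisj hvSig (Finset.nodup_toList _)
      (Finset.mem_toList.mpr (Finset.mem_univ j))]
    exact hv j

lemma cl_parFam_of_pairwise_disjoint [Fintype J] (hdisj : Pairwise (Disjoint on Sig))
    {M : J → Set (List σ)} (hM : ∀ j, ∀ w ∈ M j, ∀ a ∈ w, a ∈ Sig j) :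
    cl (parFam Sig M) = parFam Sig fun j => cl (M j) :=
  (cl_parFam_subset Sig M).antisymm (parFam_cl_subset hdisj hM)

end ParFam

theorem disjoint_parallel_nonblocking_general {σ : Type*} (J : Type*) [Fintype J]
    (Sig : J → Set σ)
    (hdisj : ∀ j j' : J, j ≠ j' → Sig j ∩ Sig j' = ∅)
    (M L : J → Set (List σ))
    (hL : ∀ j, ∀ w ∈ L j, ∀ a ∈ w, a ∈ Sig j)
    (hnb : ∀ j, cl (M j) = L j) :
    cl (parFam Sig M) = parFam Sig L := by
  obtain rfl : (fun j => cl (M j)) = L := funext hnb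
  exact cl_parFam_of_pairwise_disjoint
    (fun j j' hne => Set.disjoint_iff_inter_eq_empty.mpr (hdisj j j' hne))
    (fun j w hw => hL j w (subset_cl _ hw))

/-- a finite family of nonblocking languages over pairwise
disjoint alphabets has a nonblocking parallel composition. -/
theorem disjoint_parallel_nonblocking {σ : Type*} (J : Type*) [Fintype J]
    (Sig : J → Set σ)
    (hdisj : ∀ j j' : J, j ≠ j' → Sig j ∩ Sig j' = ∅)
    (M L : J → Set (List σ))
    (hsub : ∀ j, M j ⊆ L j)
    (hL : ∀ j, ∀ w ∈ L j, ∀ a ∈ w, a ∈ Sig j)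
    (hnb : ∀ j, cl (M j) = L j) :
    cl (parFam Sig M) = parFam Sig L :=
  disjoint_parallel_nonblocking_general J Sig hdisj M L hL hnb
end

section
/- Let B1, …, Bn (n ≥ 2) be DFAs over a common alphabet Σ and x ∉ Σ. Construct A1 from B1 by adding states d1 (non-marked) and d1' (marked), x-transitions from every marked state of B1 to d1 and from d1 to d1', and marking all original states of B1; for i ≥ 2 construct Ai from Bi by adding a marked state di and x-transitions from every marked state of Bi to di, marking all states. Then cl(L_m(∥_{i=1}^n Ai)) = L(∥_{i=1}^n Ai) if and only if ∩_{i=1}^n L_m(Bi) = ∅. -/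
structure DFA' (Q σ : Type*) where
  δ : Q → σ → Option Q
  q0 : Q
  F : Set Q

def DFA'.evalFrom {Q σ : Type*} (A : DFA' Q σ) (o : Option Q) (w : List σ) : Option Q :=
  w.foldl (fun o a => o.bind fun q => A.δ q a) o

def DFA'.lang {Q σ : Type*} (A : DFA' Q σ) : Set (List σ) :=
  {w | (A.evalFrom (some A.q0) w).isSome}

def DFA'.langM {Q σ : Type*} (A : DFA' Q σ) : Set (List σ) :=
  {w | ∃ q ∈ A.F, A.evalFrom (some A.q0) w = some q}

open scoped Classical in
/-- `A1` built from `B1`: the alphabet is `Σ ∪ {x}` (`Option σ`, with `none`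
playing the role of `x`); two fresh states `d1 = Sum.inr false` (non-marked)
and `d1' = Sum.inr true` (marked) are added, with `x`-transitions from every
marked state of `B1` to `d1` and from `d1` to `d1'`; all original states
are marked. -/
noncomputable def aOne {Q σ : Type*} (B : DFA' Q σ) : DFA' (Q ⊕ Bool) (Option σ) where
  δ := fun q e =>
    match q, e with
    | Sum.inl q, some a => (B.δ q a).map Sum.inl
    | Sum.inl q, none => if q ∈ B.F then some (Sum.inr false) else none
    | Sum.inr false, none => some (Sum.inr true)
    | Sum.inr false, some _ => none
    | Sum.inr true, _ => none
  q0 := Sum.inl B.q0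
  F := Set.range Sum.inl ∪ {Sum.inr true}

open scoped Classical in
/-- `Ai` (for `i ≥ 2`) built from `Bi`: a fresh marked state `di = Sum.inr ()`
is added, with `x`-transitions from every marked state of `Bi` to `di`; all
states are marked. -/
noncomputable def aRest {Q σ : Type*} (B : DFA' Q σ) : DFA' (Q ⊕ Unit) (Option σ) where
  δ := fun q e =>
    match q, e with
    | Sum.inl q, some a => (B.δ q a).map Sum.inl
    | Sum.inl q, none => if q ∈ B.F then some (Sum.inr ()) else none
    | Sum.inr _, _ => none
  q0 := Sum.inl B.q0
  F := Set.univ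

/-! Every state of the `Aᵢ` except `d₁` is marked, so a word of `L(∥ Aᵢ)` can only block if it
drives `A₁` into `d₁`, and these are exactly the words `v x` with `v ∈ ∩ L_m(Bᵢ)`. Such a word
does block: `A₁` needs a second `x` to reach a marked state, while no `Aᵢ` with `i ≥ 2` moves
after its `x`. Conversely, an `x`-free word of `L(∥ Aᵢ)` is marked in every component. -/

namespace DFA'

variable {Q σ : Type*}

section Basic

variable (A : DFA' Q σ)

@[simp]
theorem evalFrom_none (w : List σ) : A.evalFrom none w = none := by
  induction w with
  | nil => rfl
  | cons _ _ ih => exact ih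

@[simp]
theorem evalFrom_nil (o : Option Q) : A.evalFrom o [] = o := rfl

@[simp]
theorem evalFrom_some_cons (q : Q) (a : σ) (w : List σ) :
    A.evalFrom (some q) (a :: w) = A.evalFrom (A.δ q a) w := rfl

theorem evalFrom_append (o : Option Q) (u v : List σ) :
    A.evalFrom o (u ++ v) = A.evalFrom (A.evalFrom o u) v :=
  List.foldl_append

theorem mem_lang_of_append_mem_lang {w u : List σ} (h : w ++ u ∈ A.lang) : w ∈ A.lang := by
  simp only [lang, Set.mem_ofPred_eq, evalFrom_append] at h ⊢
  cases hw : A.evalFrom (some A.q0) w <;> simp_all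

theorem langM_subset_lang : A.langM ⊆ A.lang := by
  rintro w ⟨q, -, h⟩
  simp [lang, h]

end Basic

/-- `A` runs `B` on the letters `some a`, and the extra letter `none` (the event `x`) is
enabled in a state `Sum.inl q` only if `q` is marked in `B`. -/
structure IsXExtension {R : Type*} (A : DFA' (Q ⊕ R) (Option σ)) (B : DFA' Q σ) : Prop where
  q0_eq : A.q0 = Sum.inl B.q0
  δ_inl_some : ∀ q a, A.δ (Sum.inl q) (some a) = (B.δ q a).map Sum.inl
  mem_F_of_δ_inl_none : ∀ q, (A.δ (Sum.inl q) none).isSome → q ∈ B.F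

namespace IsXExtension

variable {R : Type*} {A : DFA' (Q ⊕ R) (Option σ)} {B : DFA' Q σ}

theorem evalFrom_map_some (h : A.IsXExtension B) (o : Option Q) (v : List σ) :
    A.evalFrom (o.map Sum.inl) (v.map some) = (B.evalFrom o v).map Sum.inl := by
  induction v generalizing o with
  | nil => rfl
  | cons a v ih =>
    cases o with
    | none => simp
    | some q => simpa [h.δ_inl_some] using ih (B.δ q a)

theorem eval_map_some (h : A.IsXExtension B) (v : List σ) :
    A.evalFrom (some A.q0) (v.map some) = (B.evalFrom (some B.q0) v).map Sum.inl := by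
  rw [h.q0_eq]
  exact h.evalFrom_map_some (some B.q0) v

theorem map_some_mem_lang_iff (h : A.IsXExtension B) (v : List σ) :
    v.map some ∈ A.lang ↔ v ∈ B.lang := by
  simp [lang, h.eval_map_some]

theorem mem_langM_of_mem_lang (h : A.IsXExtension B) {v : List σ} {u : List (Option σ)}
    (hw : v.map some ++ none :: u ∈ A.lang) : v ∈ B.langM := by
  have hx : v.map some ++ [none] ∈ A.lang :=
    A.mem_lang_of_append_mem_lang (u := u) (by simpa using hw)
  simp only [lang, Set.mem_ofPred_eq, evalFrom_append, h.eval_map_some] at hx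
  cases hv : B.evalFrom (some B.q0) v with
  | none => simp [hv] at hx
  | some q => exact ⟨q, h.mem_F_of_δ_inl_none q (by simpa [hv] using hx), hv⟩

end IsXExtension

end DFA'

section Construction

variable {Q σ : Type*} (B : DFA' Q σ)

theorem aOne_isXExtension : (aOne B).IsXExtension B where
  q0_eq := rfl
  δ_inl_some _ _ := rfl
  mem_F_of_δ_inl_none q hq := by
    by_contra hF
    simp [aOne, hF] at hq

theorem aRest_isXExtension : (aRest B).IsXExtension B where
  q0_eq := rfl
  δ_inl_some _ _ := rfl
  mem_F_of_δ_inl_none q hq := by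
    by_contra hF
    simp [aRest, hF] at hq

theorem aRest_langM_eq_lang : (aRest B).langM = (aRest B).lang := by
  ext w
  simp [DFA'.langM, DFA'.lang, Option.isSome_iff_exists, aRest]

variable {B}

theorem map_some_mem_aOne_langM {v : List σ} (hv : v ∈ B.lang) : v.map some ∈ (aOne B).langM := by
  obtain ⟨q, hq⟩ := Option.isSome_iff_exists.1 hv
  exact ⟨Sum.inl q, Or.inl ⟨q, rfl⟩, by rw [(aOne_isXExtension B).eval_map_some, hq]; rfl⟩

theorem aOne_eval_map_some_append_x {v : List σ} (hv : v ∈ B.langM) :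
    (aOne B).evalFrom (some (aOne B).q0) (v.map some ++ [none]) = some (Sum.inr false) := by
  obtain ⟨q, hF, hq⟩ := hv
  rw [DFA'.evalFrom_append, (aOne_isXExtension B).eval_map_some, hq]
  simp [aOne, hF]

theorem aRest_eval_map_some_append_x {v : List σ} (hv : v ∈ B.langM) :
    (aRest B).evalFrom (some (aRest B).q0) (v.map some ++ [none]) = some (Sum.inr ()) := by
  obtain ⟨q, hF, hq⟩ := hv
  rw [DFA'.evalFrom_append, (aRest_isXExtension B).eval_map_some, hq]
  simp [aRest, hF]

theorem map_some_append_x_mem_aOne_lang_diff_langM {v : List σ} (hv : v ∈ B.langM) :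
    v.map some ++ [none] ∈ (aOne B).lang \ (aOne B).langM := by
  simp only [DFA'.lang, DFA'.langM, Set.mem_sdiff, Set.mem_ofPred_eq,
    aOne_eval_map_some_append_x hv]
  simp [aOne]

theorem map_some_append_x_mem_aRest_lang {v : List σ} (hv : v ∈ B.langM) :
    v.map some ++ [none] ∈ (aRest B).lang := by
  simp [DFA'.lang, aRest_eval_map_some_append_x hv]

theorem eq_nil_of_map_some_append_x_append_mem_aRest_lang {v : List σ} {u : List (Option σ)}
    (hw : v.map some ++ none :: u ∈ (aRest B).lang) : u = [] := by
  have hv := (aRest_isXExtension B).mem_langM_of_mem_lang hw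
  rw [← List.singleton_append, ← List.append_assoc] at hw
  cases u with
  | nil => rfl
  | cons a u =>
    simp only [DFA'.lang, Set.mem_ofPred_eq, DFA'.evalFrom_append,
      aRest_eval_map_some_append_x hv] at hw
    simp [aRest] at hw

end Construction

theorem List.exists_eq_map_some_or_eq_map_some_append_none_cons {α : Type*}
    (w : List (Option α)) :
    (∃ v : List α, w = v.map some) ∨ ∃ (v : List α) (u : List (Option α)), w = v.map some ++ none :: u := by
  induction w with
  | nil => exact Or.inl ⟨[], rfl⟩
  | cons a w ih =>
    cases a with
    | none => exact Or.inr ⟨[], w, rfl⟩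
    | some b =>
      rcases ih with ⟨v, rfl⟩ | ⟨v, u, rfl⟩
      · exact Or.inl ⟨b :: v, rfl⟩
      · exact Or.inr ⟨b :: v, u, rfl⟩

section Composition

variable {ι σ : Type*} {Q : ι → Type*} (B : ∀ i, DFA' (Q i) σ) (i₀ : ι)

def composedLangM : Set (List (Option σ)) :=
  (aOne (B i₀)).langM ∩ ⋂ (i) (_ : i ≠ i₀), (aRest (B i)).langM

def composedLang : Set (List (Option σ)) :=
  (aOne (B i₀)).lang ∩ ⋂ (i) (_ : i ≠ i₀), (aRest (B i)).lang

theorem mem_composedLang_of_append_mem {w u : List (Option σ)}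
    (h : w ++ u ∈ composedLang B i₀) : w ∈ composedLang B i₀ := by
  simp only [composedLang, Set.mem_inter_iff, Set.mem_iInter] at h ⊢
  exact ⟨(aOne _).mem_lang_of_append_mem_lang h.1,
    fun i hi => (aRest _).mem_lang_of_append_mem_lang (h.2 i hi)⟩

theorem composedLangM_subset_composedLang : composedLangM B i₀ ⊆ composedLang B i₀ :=
  Set.inter_subset_inter (DFA'.langM_subset_lang _)
    (Set.iInter₂_mono fun _ _ => DFA'.langM_subset_lang _)

theorem cl_composedLangM_subset_composedLang : cl (composedLangM B i₀) ⊆ composedLang B i₀ :=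
  fun _ ⟨_, hu⟩ => mem_composedLang_of_append_mem B i₀ (composedLangM_subset_composedLang B i₀ hu)

theorem composedLang_subset_cl_composedLangM (hB : ⋂ i, (B i).langM = ∅) :
    composedLang B i₀ ⊆ cl (composedLangM B i₀) := by
  rintro w ⟨h₀, h⟩
  rw [Set.mem_iInter₂] at h
  rcases List.exists_eq_map_some_or_eq_map_some_append_none_cons w with ⟨v, rfl⟩ | ⟨v, u, rfl⟩
  · refine ⟨[], ?_⟩
    rw [List.append_nil]
    refine ⟨map_some_mem_aOne_langM ((aOne_isXExtension _).map_some_mem_lang_iff v |>.1 h₀), ?_⟩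
    simpa only [aRest_langM_eq_lang, Set.mem_iInter₂] using h
  · have hv : v ∈ ⋂ i, (B i).langM := Set.mem_iInter.2 fun i => by
      by_cases hi : i = i₀
      · subst hi
        exact (aOne_isXExtension _).mem_langM_of_mem_lang h₀
      · exact (aRest_isXExtension _).mem_langM_of_mem_lang (h i hi)
    simp [hB] at hv

theorem map_some_append_x_mem_composedLang_diff_cl [Nontrivial ι] {v : List σ}
    (hv : v ∈ ⋂ i, (B i).langM) :
    v.map some ++ [none] ∈ composedLang B i₀ \ cl (composedLangM B i₀) := by
  rw [Set.mem_iInter] at hv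
  have h₀ := map_some_append_x_mem_aOne_lang_diff_langM (hv i₀)
  refine ⟨⟨h₀.1, Set.mem_iInter₂.2 fun i _ => map_some_append_x_mem_aRest_lang (hv i)⟩, ?_⟩
  rintro ⟨u, hu₀, hu⟩
  obtain ⟨i₁, hi₁⟩ := exists_ne i₀
  have hu_nil : u = [] := eq_nil_of_map_some_append_x_append_mem_aRest_lang
    (by simpa [aRest_langM_eq_lang] using Set.mem_iInter₂.1 hu i₁ hi₁)
  subst hu_nil
  exact h₀.2 (by simpa using hu₀)

theorem cl_composedLangM_eq_composedLang_iff [Nontrivial ι] :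
    cl (composedLangM B i₀) = composedLang B i₀ ↔ ⋂ i, (B i).langM = ∅ := by
  refine ⟨fun h => Set.eq_empty_of_forall_notMem fun v hv => ?_,
    fun hB => (cl_composedLangM_subset_composedLang B i₀).antisymm
      (composedLang_subset_cl_composedLangM B i₀ hB)⟩
  have hx := map_some_append_x_mem_composedLang_diff_cl B i₀ hv
  rw [h] at hx
  exact hx.2 hx.1

end Composition

/-- since all `Ai` are over the common alphabet `Σ ∪ {x}`, the
languages of their parallel composition are the intersections of their
languages, and the composition is nonblocking iff `∩ L_m(Bi) = ∅`. -/
theorem modular_nonblocking_iff_empty_intersection {σ : Type*} (n : ℕ) (hn : 2 ≤ n)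
    (Q : Fin n → Type*) (B : ∀ i, DFA' (Q i) σ) :
    cl ((aOne (B ⟨0, by omega⟩)).langM ∩
        ⋂ (i : Fin n) (_ : i ≠ ⟨0, by omega⟩), (aRest (B i)).langM) =
      (aOne (B ⟨0, by omega⟩)).lang ∩
        ⋂ (i : Fin n) (_ : i ≠ ⟨0, by omega⟩), (aRest (B i)).lang ↔
    ⋂ i, (B i).langM = ∅ := by
  have : Nontrivial (Fin n) := Fin.nontrivial_iff_two_le.2 hn
  exact cl_composedLangM_eq_composedLang_iff B ⟨0, by omega⟩
end
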